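/- Let ν and μ be probability measures on a measurable space α with μ ≪ ν, let w = dμ/dν be square-integrable with respect to ν, and let g : α → ℝ be a bounded measurable function with sup norm ‖g‖∞. If X₁, …, X_N are independent random variables each with distribution ν, then the variance of the estimator D̂ = (1/N) · Σ_{i=1}^N ( w(X_i)·g(X_i) − g(X_i) ) satisfies Var(D̂) ≤ ‖g‖∞² · ( d₂(μ‖ν)/N − 1/N ), where d₂(μ‖ν) = ∫ (dμ/dν)² dν. Equivalently, with the effective sample size ESS := N / d₂(μ‖ν), one has Var(D̂) ≤ ‖g‖∞² · ( 1/ESS − 1/N ). (Proposition 1, variance bound.) -/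

import Mathlib

open MeasureTheory ProbabilityTheory

/-- **Proposition 1 (variance bound).** For probability measures `μ ≪ ν` with square-integrable
weight `w = dμ/dν`, bounded measurable `g` with sup norm `C`, and independent `X₁, …, X_N` each
with distribution `ν`, the variance of `D̂ = (1/N) · Σᵢ (w(Xᵢ)·g(Xᵢ) − g(Xᵢ))` satisfies
`Var(D̂) ≤ ‖g‖∞² · (d₂(μ‖ν)/N − 1/N) = ‖g‖∞² · (1/ESS − 1/N)`,
where `d₂(μ‖ν) = ∫ (dμ/dν)² dν` and `ESS = N / d₂(μ‖ν)`. -/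
theorem fps_estimator_variance_bound
    {α Ω : Type*} [MeasurableSpace α] [MeasurableSpace Ω]
    (P : Measure Ω) [IsProbabilityMeasure P]
    (ν μ : Measure α) [IsProbabilityMeasure ν] [IsProbabilityMeasure μ]
    (hac : μ ≪ ν)
    (hL2 : Integrable (fun x => ((μ.rnDeriv ν x).toReal) ^ 2) ν)
    (g : α → ℝ) (hg : Measurable g) (C : ℝ) (hgb : ∀ x, |g x| ≤ C)
    (N : ℕ) (hN : 0 < N)
    (X : Fin N → Ω → α) (hXm : ∀ i, Measurable (X i))
    (hindep : iIndepFun X P)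
    (hdist : ∀ i, P.map (X i) = ν) :
    (∫ ω, ((1 / (N : ℝ)) *
          ∑ i, ((μ.rnDeriv ν (X i ω)).toReal * g (X i ω) - g (X i ω))) ^ 2 ∂P)
        - (∫ ω, (1 / (N : ℝ)) *
            ∑ i, ((μ.rnDeriv ν (X i ω)).toReal * g (X i ω) - g (X i ω)) ∂P) ^ 2
      ≤ C ^ 2 * ((∫ x, ((μ.rnDeriv ν x).toReal) ^ 2 ∂ν) / N - 1 / N) := by
  classical
  set w : α → ℝ := fun x => (μ.rnDeriv ν x).toReal with hw
  set f : α → ℝ := fun x => w x * g x - g x with hf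
  have hwm : Measurable w := (Measure.measurable_rnDeriv μ ν).ennreal_toReal
  have hfm : Measurable f := (hwm.mul hg).sub hg
  have hw_int : Integrable w ν := Measure.integrable_toReal_rnDeriv
  have hw1 : ∫ x, w x ∂ν = 1 := by
    rw [Measure.integral_toReal_rnDeriv hac]; simp
  -- integrability of (w-1)^2
  have hwm1_int : Integrable (fun x => (w x - 1) ^ 2) ν := by
    have : Integrable (fun x => w x ^ 2 - 2 * w x + 1) ν :=
      (hL2.sub (hw_int.const_mul 2)).add (integrable_const 1)
    convert this using 2 with x
    ring
  -- f² ≤ C² (w-1)², so f² integrable and f ∈ MemLp 2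
  have hfsq_le : ∀ x, f x ^ 2 ≤ C ^ 2 * (w x - 1) ^ 2 := by
    intro x
    have h1 : f x ^ 2 = (w x - 1) ^ 2 * g x ^ 2 := by simp only [hf]; ring
    have h2 : g x ^ 2 ≤ C ^ 2 := by
      have := sq_abs (g x) ▸ pow_le_pow_left₀ (abs_nonneg _) (hgb x) 2
      simpa [sq_abs] using this
    calc f x ^ 2 = (w x - 1) ^ 2 * g x ^ 2 := h1
      _ ≤ (w x - 1) ^ 2 * C ^ 2 := by
        exact mul_le_mul_of_nonneg_left h2 (sq_nonneg _)
      _ = C ^ 2 * (w x - 1) ^ 2 := by ring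
  have hfsq_int : Integrable (fun x => f x ^ 2) ν := by
    refine Integrable.mono' (hwm1_int.const_mul (C ^ 2)) ((hfm.pow_const 2).aestronglyMeasurable)
      (Filter.Eventually.of_forall fun x => ?_)
    rw [Real.norm_eq_abs, abs_of_nonneg (sq_nonneg _)]
    exact hfsq_le x
  have hfL2 : MemLp f 2 ν := by
    refine memLp_two_iff_integrable_sq hfm.aestronglyMeasurable |>.2 ?_
    simpa [sq] using hfsq_int
  -- transfer to P
  have hfXL2 : ∀ i, MemLp (fun ω => f (X i ω)) 2 P := by
    intro i
    have : MemLp f 2 (P.map (X i)) := by rw [hdist i]; exact hfL2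
    exact (memLp_map_measure_iff hfm.aestronglyMeasurable (hXm i).aemeasurable).1 this
  set S : Ω → ℝ := fun ω => (1 / (N : ℝ)) * ∑ i, f (X i ω) with hS
  have hsum_eq : (fun ω => ∑ i, f (X i ω)) = ∑ i : Fin N, (fun ω => f (X i ω)) := by
    funext ω; simp
  have hSL2 : MemLp S 2 P := by
    have h : MemLp (fun ω => ∑ i, f (X i ω)) 2 P := by
      rw [hsum_eq]
      exact memLp_finset_sum' (μ := P) Finset.univ (fun i _ => hfXL2 i)
    exact h.const_mul _
  have key : (∫ ω, S ω ^ 2 ∂P) - (∫ ω, S ω ∂P) ^ 2 = variance S P := by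
    rw [variance_eq_sub hSL2]; rfl
  -- variance of sum
  have hvar_sum : variance S P = (1 / (N : ℝ)) ^ 2 * ∑ i : Fin N, variance (fun ω => f (X i ω)) P := by
    have h1 : variance S P = (1 / (N : ℝ)) ^ 2 * variance (fun ω => ∑ i, f (X i ω)) P := by
      have := variance_const_mul (1 / (N : ℝ)) (fun ω => ∑ i, f (X i ω)) P
      simpa [hS] using this
    rw [h1]
    congr 1
    rw [hsum_eq]
    exact IndepFun.variance_sum (μ := P) (s := Finset.univ)
      (fun i _ => hfXL2 i)
      (fun i _ j _ hij => (hindep.indepFun hij).comp hfm hfm)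
  -- each variance equals variance under ν, bounded by ∫ f²
  have hvar_i : ∀ i : Fin N, variance (fun ω => f (X i ω)) P ≤ ∫ x, f x ^ 2 ∂ν := by
    intro i
    have h2 : ∫ ω, f (X i ω) ^ 2 ∂P = ∫ x, f x ^ 2 ∂ν := by
      rw [← hdist i, integral_map (hXm i).aemeasurable
        ((hfm.pow_const 2).aestronglyMeasurable)]
    calc variance (fun ω => f (X i ω)) P
        ≤ ∫ ω, ((fun ω => f (X i ω)) ^ 2) ω ∂P :=
          variance_le_expectation_sq (hfXL2 i).aestronglyMeasurable
      _ = ∫ x, f x ^ 2 ∂ν := by simpa using h2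
  -- ∫ f² ≤ C² (d₂ - 1)
  have hint_bound : ∫ x, f x ^ 2 ∂ν ≤ C ^ 2 * ((∫ x, w x ^ 2 ∂ν) - 1) := by
    have h1 : ∫ x, f x ^ 2 ∂ν ≤ ∫ x, C ^ 2 * (w x - 1) ^ 2 ∂ν :=
      integral_mono hfsq_int (hwm1_int.const_mul _) hfsq_le
    have h2 : ∫ x, (w x - 1) ^ 2 ∂ν = (∫ x, w x ^ 2 ∂ν) - 1 := by
      have expand : ∀ x, (w x - 1) ^ 2 = w x ^ 2 - 2 * w x + 1 := fun x => by ring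
      simp_rw [expand]
      have hI1 : Integrable (fun x => w x ^ 2 - 2 * w x) ν := hL2.sub (hw_int.const_mul 2)
      rw [integral_add hI1 (integrable_const 1),
        integral_sub hL2 (hw_int.const_mul 2), integral_const_mul, hw1]
      simp
      ring
    rw [integral_const_mul, h2] at h1
    exact h1
  -- put it together
  have hNpos : (0 : ℝ) < N := Nat.cast_pos.2 hN
  have : (∫ ω, S ω ^ 2 ∂P) - (∫ ω, S ω ∂P) ^ 2
      ≤ (1 / (N : ℝ)) * (C ^ 2 * ((∫ x, w x ^ 2 ∂ν) - 1)) := by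
    rw [key, hvar_sum]
    calc (1 / (N : ℝ)) ^ 2 * ∑ i : Fin N, variance (fun ω => f (X i ω)) P
        ≤ (1 / (N : ℝ)) ^ 2 * ∑ i : Fin N, (C ^ 2 * ((∫ x, w x ^ 2 ∂ν) - 1)) := by
          refine mul_le_mul_of_nonneg_left (Finset.sum_le_sum fun i _ => ?_) (sq_nonneg _)
          exact (hvar_i i).trans hint_bound
      _ = (1 / (N : ℝ)) * (C ^ 2 * ((∫ x, w x ^ 2 ∂ν) - 1)) := by
          rw [Finset.sum_const, Finset.card_univ, Fintype.card_fin]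
          field_simp
          try ring
  calc (∫ ω, ((1 / (N : ℝ)) * ∑ i, (w (X i ω) * g (X i ω) - g (X i ω))) ^ 2 ∂P)
        - (∫ ω, (1 / (N : ℝ)) * ∑ i, (w (X i ω) * g (X i ω) - g (X i ω)) ∂P) ^ 2
      = (∫ ω, S ω ^ 2 ∂P) - (∫ ω, S ω ∂P) ^ 2 := rfl
    _ ≤ (1 / (N : ℝ)) * (C ^ 2 * ((∫ x, w x ^ 2 ∂ν) - 1)) := this
    _ = C ^ 2 * ((∫ x, w x ^ 2 ∂ν) / N - 1 / N) := by field_simp; try ring
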